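/- Let F : (0, ε) → ℝ be a C¹ function that is strictly monotone with strictly monotone derivative on (0, ε), and suppose F(t) → 0 as t → 0⁺. Then t·F'(t) → 0 as t → 0⁺. -/

import Mathlib

/-!
Since `F'` is monotone or antitone, `F` is convex or concave on `(0, ε)`; replacing `F` by `-F`
we may assume it is convex. Comparing `F'(t)` with the slopes of the chords over `[t/2, t]` and
`[t, 2t]` gives
`2 (F t - F (t/2)) ≤ t F'(t) ≤ F (2t) - F t`,
and both bounds tend to `0` with `F`.
-/

open Set Filter Topology

lemma Filter.Tendsto.comp_const_mul_nhdsGT_zero {𝕜 α : Type*} [Field 𝕜] [LinearOrder 𝕜]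
    [IsStrictOrderedRing 𝕜] [TopologicalSpace 𝕜] [OrderTopology 𝕜] {f : 𝕜 → α} {l : Filter α}
    {c : 𝕜} (hf : Tendsto f (𝓝[>] 0) l) (hc : 0 < c) :
    Tendsto (fun t => f (c * t)) (𝓝[>] 0) l :=
  hf.comp (tendsto_iff_comap.2 (comap_mulLeft_nhdsGT_zero hc).ge)

namespace ConvexOn

variable {S : Set ℝ} {F : ℝ → ℝ} {t : ℝ}

lemma two_mul_sub_half_le_mul_deriv (hF : ConvexOn ℝ S F) (ht : 0 < t) (hhalf : t / 2 ∈ S)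
    (hS : t ∈ S) (hd : DifferentiableAt ℝ F t) :
    2 * (F t - F (t / 2)) ≤ t * deriv F t := by
  have hslope := hF.slope_le_deriv hhalf hS (half_lt_self ht) hd
  rw [slope_def_field, div_le_iff₀ (by linarith)] at hslope
  linarith

lemma mul_deriv_le_sub_two_mul (hF : ConvexOn ℝ S F) (ht : 0 < t) (hS : t ∈ S)
    (hdouble : 2 * t ∈ S) (hd : DifferentiableAt ℝ F t) :
    t * deriv F t ≤ F (2 * t) - F t := by
  have hslope := hF.deriv_le_slope hS hdouble (by linarith) hd
  rw [slope_def_field, le_div_iff₀ (by linarith)] at hslope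
  linarith

theorem tendsto_mul_deriv_nhdsGT_zero {ε : ℝ} (hε : 0 < ε) (hF : ConvexOn ℝ (Ioo 0 ε) F)
    (hd : DifferentiableOn ℝ F (Ioo 0 ε)) (hlim : Tendsto F (𝓝[>] 0) (𝓝 0)) :
    Tendsto (fun t => t * deriv F t) (𝓝[>] 0) (𝓝 0) := by
  have hlower : Tendsto (fun t => 2 * (F t - F (t / 2))) (𝓝[>] 0) (𝓝 0) := by
    simpa [div_eq_inv_mul] using (hlim.sub (hlim.comp_const_mul_nhdsGT_zero
      (inv_pos.2 two_pos))).const_mul 2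
  have hupper : Tendsto (fun t => F (2 * t) - F t) (𝓝[>] 0) (𝓝 0) := by
    simpa using (hlim.comp_const_mul_nhdsGT_zero two_pos).sub hlim
  have hsmall : Ioo 0 (ε / 2) ∈ 𝓝[>] (0 : ℝ) := Ioo_mem_nhdsGT (half_pos hε)
  refine tendsto_of_tendsto_of_tendsto_of_le_of_le' hlower hupper ?_ ?_ <;>
    filter_upwards [hsmall] with t ⟨ht, htε⟩
  all_goals
    have hmem : t ∈ Ioo 0 ε := ⟨ht, by linarith⟩
    have hdt : DifferentiableAt ℝ F t := hd.differentiableAt (Ioo_mem_nhds hmem.1 hmem.2)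
  · exact hF.two_mul_sub_half_le_mul_deriv ht ⟨by linarith, by linarith⟩ hmem hdt
  · exact hF.mul_deriv_le_sub_two_mul ht hmem ⟨by linarith, by linarith⟩ hdt

end ConvexOn

theorem ConcaveOn.tendsto_mul_deriv_nhdsGT_zero {ε : ℝ} (hε : 0 < ε) {F : ℝ → ℝ}
    (hF : ConcaveOn ℝ (Ioo 0 ε) F) (hd : DifferentiableOn ℝ F (Ioo 0 ε))
    (hlim : Tendsto F (𝓝[>] 0) (𝓝 0)) :
    Tendsto (fun t => t * deriv F t) (𝓝[>] 0) (𝓝 0) := by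
  simpa using (hF.neg.tendsto_mul_deriv_nhdsGT_zero hε hd.neg (by simpa using hlim.neg : Tendsto (fun t => -F t) _ _)).neg

theorem stmt_3_general (ε : ℝ) (hε : 0 < ε) (F : ℝ → ℝ)
    (hF : ContDiffOn ℝ 1 F (Set.Ioo 0 ε))
    (hmono' : StrictMonoOn (deriv F) (Set.Ioo 0 ε) ∨ StrictAntiOn (deriv F) (Set.Ioo 0 ε))
    (hlim : Tendsto F (nhdsWithin 0 (Set.Ioi 0)) (nhds 0)) :
    Tendsto (fun t => t * deriv F t) (nhdsWithin 0 (Set.Ioi 0)) (nhds 0) := by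
  have hd : DifferentiableOn ℝ F (Ioo 0 ε) := hF.differentiableOn one_ne_zero
  have hd' : DifferentiableOn ℝ F (interior (Ioo 0 ε)) := by rwa [interior_Ioo]
  rw [← interior_Ioo (a := (0 : ℝ)) (b := ε)] at hmono'
  rcases hmono' with hmono' | hanti'
  · have hconvex := MonotoneOn.convexOn_of_deriv (convex_Ioo 0 ε) hd.continuousOn hd'
      hmono'.monotoneOn
    exact hconvex.tendsto_mul_deriv_nhdsGT_zero hε hd hlim
  · have hconcave := AntitoneOn.concaveOn_of_deriv (convex_Ioo 0 ε) hd.continuousOn hd'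
      hanti'.antitoneOn
    exact hconcave.tendsto_mul_deriv_nhdsGT_zero hε hd hlim

/-- If `F : (0,ε) → ℝ` is `C¹`, strictly monotone with strictly monotone derivative, and
`F(t) → 0` as `t → 0⁺`, then `t·F'(t) → 0` as `t → 0⁺`. -/
theorem stmt_3 (ε : ℝ) (hε : 0 < ε) (F : ℝ → ℝ)
    (hF : ContDiffOn ℝ 1 F (Set.Ioo 0 ε))
    (hmono : StrictMonoOn F (Set.Ioo 0 ε) ∨ StrictAntiOn F (Set.Ioo 0 ε))
    (hmono' : StrictMonoOn (deriv F) (Set.Ioo 0 ε) ∨ StrictAntiOn (deriv F) (Set.Ioo 0 ε))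
    (hlim : Tendsto F (nhdsWithin 0 (Set.Ioi 0)) (nhds 0)) :
    Tendsto (fun t => t * deriv F t) (nhdsWithin 0 (Set.Ioi 0)) (nhds 0) :=
  stmt_3_general ε hε F hF hmono' hlim
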